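/- Let A and B be 2×2 real matrices with columns A = (A₁ | A₂) and B = (B₁ | B₂). Then A·x and B·x are linearly independent for every nonzero x ∈ ℝ² if and only if [det(A₁ | B₂) + det(A₂ | B₁)]² − 4·det(A₁ | B₁)·det(A₂ | B₂) < 0. -/
import Mathlib

/-- The 2×2 matrix with columns `v` and `w`. -/
def colPair (v w : Fin 2 → ℝ) : Matrix (Fin 2) (Fin 2) ℝ :=
  Matrix.of fun i j => ![v, w] j i

lemma li_iff_det (u v : Fin 2 → ℝ) :
    LinearIndependent ℝ ![u, v] ↔ u 0 * v 1 - u 1 * v 0 ≠ 0 := by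
  have h : LinearIndependent ℝ (fun i => (Matrix.of ![u, v]) i) ↔
      IsUnit (Matrix.of ![u, v]) := Matrix.linearIndependent_rows_iff_isUnit
  rw [show (![u, v] : Fin 2 → Fin 2 → ℝ) = fun i => (Matrix.of ![u, v]) i from rfl, h,
    Matrix.isUnit_iff_isUnit_det, isUnit_iff_ne_zero, Matrix.det_fin_two]
  simp [Matrix.of_apply]

lemma quad_iff (a b c : ℝ) :
    (∀ s t : ℝ, ¬(s = 0 ∧ t = 0) → a * s ^ 2 + b * s * t + c * t ^ 2 ≠ 0) ↔
    b ^ 2 - 4 * a * c < 0 := by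
  constructor
  · intro h
    by_contra hd
    push_neg at hd
    rcases eq_or_ne a 0 with ha | ha
    · exact h 1 0 (by simp) (by simp [ha])
    · set s := Real.sqrt (b ^ 2 - 4 * a * c) with hs
      have hs2 : s ^ 2 = b ^ 2 - 4 * a * c := Real.sq_sqrt hd
      refine h ((-b + s) / (2 * a)) 1 (by simp) ?_
      field_simp
      nlinarith [hs2]
  · intro hd s t hst h
    rcases eq_or_ne t 0 with ht | ht
    · have hs : s ≠ 0 := fun h0 => hst ⟨h0, ht⟩
      have : a = 0 := by
        have := h
        rw [ht] at this
        have := mul_left_cancel₀ (pow_ne_zero 2 hs) (by nlinarith : s ^ 2 * a = s ^ 2 * 0)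
        linarith
      rw [this] at hd
      nlinarith [sq_nonneg b]
    · have ht2 : 0 < t ^ 2 := by positivity
      have h4 : 4 * a * (a * s ^ 2 + b * s * t + c * t ^ 2) = 0 := by rw [h]; ring
      nlinarith [sq_nonneg (2 * a * s + b * t), ht2, h4,
        mul_pos (by linarith : (0:ℝ) < 4 * a * c - b ^ 2) ht2]

/-- `Ax` and `Bx` are linearly independent for every nonzero `x ∈ ℝ²` iff
`[det(A₁|B₂) + det(A₂|B₁)]² − 4 det(A₁|B₁) det(A₂|B₂) < 0`, where `Aᵢ, Bᵢ`
are the columns of `A` and `B`. -/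
theorem linearIndependent_iff_column_discriminant_neg (A B : Matrix (Fin 2) (Fin 2) ℝ) :
    (∀ x : Fin 2 → ℝ, x ≠ 0 → LinearIndependent ℝ ![A.mulVec x, B.mulVec x]) ↔
    ((colPair (A.transpose 0) (B.transpose 1)).det +
        (colPair (A.transpose 1) (B.transpose 0)).det) ^ 2 -
      4 * (colPair (A.transpose 0) (B.transpose 0)).det *
        (colPair (A.transpose 1) (B.transpose 1)).det < 0 := by
  rw [← quad_iff]
  have keyeq : ∀ s t : ℝ,
      A.mulVec ![s, t] 0 * B.mulVec ![s, t] 1 - A.mulVec ![s, t] 1 * B.mulVec ![s, t] 0 =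
      (colPair (A.transpose 0) (B.transpose 0)).det * s ^ 2 +
        ((colPair (A.transpose 0) (B.transpose 1)).det +
          (colPair (A.transpose 1) (B.transpose 0)).det) * s * t +
        (colPair (A.transpose 1) (B.transpose 1)).det * t ^ 2 := by
    intro s t
    simp [Matrix.mulVec, dotProduct, colPair, Matrix.det_fin_two, Fin.sum_univ_two,
      Matrix.transpose]
    ring
  constructor
  · intro h s t hst
    have hx : (![s, t] : Fin 2 → ℝ) ≠ 0 := by
      intro h0
      exact hst ⟨by simpa using congrFun h0 0, by simpa using congrFun h0 1⟩
    have := (li_iff_det _ _).mp (h ![s, t] hx)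
    rwa [keyeq] at this
  · intro hq x hx
    rw [li_iff_det]
    have hx' : x = ![x 0, x 1] := by
      funext i; fin_cases i <;> rfl
    rw [hx', keyeq]
    apply hq
    rintro ⟨h0, h1⟩
    exact hx (by funext i; fin_cases i <;> simp [h0, h1])
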